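/- arXiv:1311.7446 — 6 statements merged into one kernel-verified Lean document; each statement's English description precedes it below -/
import Mathlib

section
/- If G is a finite group generated by two elements a and b such that the commutator [a,b] = a b a⁻¹ b⁻¹ has order 2, then the order of G is divisible by 4. -/
open scoped commutatorElement

/-!
Left multiplication by `c = ⁅a, b⁆` is a fixed-point-free involution of `G`, so it is a product
of `|G| / 2` disjoint transpositions and has sign `(-1) ^ (|G| / 2)`. Being a commutator, its
sign is also `1`, so `|G| / 2` is even.
-/

namespace Equiv.Perm

theorem four_dvd_card_of_sq_eq_one_of_sign_eq_one {α : Type*} [Fintype α] [DecidableEq α]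
    {σ : Perm α} (hsq : σ ^ 2 = 1) (hfix : ∀ x, σ x ≠ x) (hsign : sign σ = 1) :
    4 ∣ Fintype.card α := by
  have hsupport : σ.support = Finset.univ :=
    Finset.eq_univ_of_forall fun x => mem_support.mpr (hfix x)
  have hnofix : Fintype.card (Function.fixedPoints σ) = 0 :=
    Fintype.card_eq_zero_iff.mpr ⟨fun x => hfix x x.2⟩
  obtain ⟨k, hk⟩ : 2 ∣ Fintype.card α := by
    have := card_compl_support_modEq (p := 2) (n := 1) (by rwa [pow_one])
    rw [hsupport, Finset.compl_univ, Finset.card_empty] at this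
    exact Nat.modEq_zero_iff_dvd.mp this.symm
  rw [sign_of_pow_two_eq_one hsq, hnofix, Nat.sub_zero, hk, Nat.mul_div_cancel_left _ two_pos,
    neg_one_pow_eq_one_iff_even (by decide)] at hsign
  obtain ⟨m, rfl⟩ := hsign
  exact ⟨m, by rw [hk]; ring⟩

end Equiv.Perm

theorem sign_toPermHom_commutatorElement {G : Type*} [Group G] [Fintype G] [DecidableEq G]
    (a b : G) : Equiv.Perm.sign (MulAction.toPermHom G G ⁅a, b⁆) = 1 := by
  rw [← MonoidHom.comp_apply, map_commutatorElement, commutatorElement_eq_one_iff_commute]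
  exact Commute.all _ _

theorem stmt_0_general {G : Type*} [Group G] [Finite G] (a b : G)
    (hcomm : orderOf ⁅a, b⁆ = 2) :
    4 ∣ Nat.card G := by
  classical
  have := Fintype.ofFinite G
  rw [Nat.card_eq_fintype_card]
  refine Equiv.Perm.four_dvd_card_of_sq_eq_one_of_sign_eq_one
    (σ := MulAction.toPermHom G G ⁅a, b⁆) ?_ (fun x hx => ?_) (sign_toPermHom_commutatorElement a b)
  · rw [← map_pow, ← hcomm, pow_orderOf_eq_one, map_one]
  · have hc : ⁅a, b⁆ = 1 := mul_right_cancel (hx.trans (one_mul x).symm)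
    rw [hc, orderOf_one] at hcomm
    exact absurd hcomm (by decide)

/-- If `G` is a finite group generated by two elements `a` and `b` such that the
commutator `⁅a, b⁆ = a * b * a⁻¹ * b⁻¹` has order 2, then `4` divides the order of `G`. -/
theorem stmt_0 {G : Type*} [Group G] [Finite G] (a b : G)
    (hgen : Subgroup.closure ({a, b} : Set G) = ⊤)
    (hcomm : orderOf ⁅a, b⁆ = 2) :
    4 ∣ Nat.card G :=
  stmt_0_general a b hcomm
end

section
/- If a finite group G of order n is generated by two elements x, y with [x,y] of order 2, and m is coprime to n, then G × C_m is generated by (x, 0) and (y, 1), and the commutator of these generators has order 2. In particular, if n is tH and gcd(n,m) = 1, then n·m is tH. -/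
/-!
Since the orders of `y` and of the generator `c` of the cyclic factor are coprime, the Chinese
remainder theorem gives a power `k` with `y ^ k = 1` and `c ^ k = c`; so `(y, c) ^ k = (1, c)`
and the subgroup generated by `(x, 1)` and `(y, c)` also contains `(1, c)` and `(y, 1)`, hence
everything. The commutator is `(⁅x, y⁆, 1)`, as `1` commutes with `c`.
-/

open scoped commutatorElement

theorem exists_pow_eq_one_and_pow_eq_self_of_coprime {M N : Type*} [Monoid M] [Monoid N]
    {a : M} {b : N} (hco : (orderOf a).Coprime (orderOf b)) :
    ∃ k : ℕ, a ^ k = 1 ∧ b ^ k = b := by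
  obtain ⟨k, hka, hkb⟩ := Nat.chineseRemainder hco 0 1
  exact ⟨k, pow_eq_one_iff_modEq.mpr hka,
    (pow_eq_pow_of_modEq hkb (pow_orderOf_eq_one b)).trans (pow_one b)⟩

section

variable {G H : Type*} [Group G] [Group H]

theorem Subgroup.closure_pair_prod_eq_top {x y : G} {c : H}
    (hG : closure ({x, y} : Set G) = ⊤) (hH : zpowers c = ⊤)
    (hco : (orderOf y).Coprime (orderOf c)) :
    closure ({(x, 1), (y, c)} : Set (G × H)) = ⊤ := by
  set K := closure ({(x, 1), (y, c)} : Set (G × H))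
  have hx : (x, (1 : H)) ∈ K := subset_closure (by simp)
  have hyc : (y, c) ∈ K := subset_closure (by simp)
  obtain ⟨k, hyk, hck⟩ := exists_pow_eq_one_and_pow_eq_self_of_coprime hco
  have hc : ((1 : G), c) ∈ K := by simpa [hyk, hck] using K.pow_mem hyc k
  have hy : (y, (1 : H)) ∈ K := by simpa using K.mul_mem hyc (K.inv_mem hc)
  rw [eq_top_iff, ← top_prod_top, ← hG, ← hH, prod_le_iff, MonoidHom.map_closure,
    MonoidHom.map_zpowers, closure_le, zpowers_le]
  refine ⟨?_, hc⟩
  rintro _ ⟨g, hg | hg, rfl⟩ <;> simp_all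

theorem orderOf_commutatorElement_mk_one (x y : G) (c : H) :
    orderOf ⁅((x, 1) : G × H), (y, c)⁆ = orderOf ⁅x, y⁆ := by
  simp [Prod.orderOf, commutatorElement_def]

end

theorem ZMod.zpowers_ofAdd_one_eq_top (m : ℕ) :
    Subgroup.zpowers (Multiplicative.ofAdd (1 : ZMod m)) = ⊤ := by
  refine (Subgroup.eq_top_iff' _).mpr fun b ↦ ?_
  obtain ⟨k, hk⟩ := ZMod.intCast_surjective b.toAdd
  exact ⟨k, by simp [← ofAdd_zsmul, hk]⟩

theorem stmt_7_general {G : Type*} [Group G] (n m : ℕ) (hn : Nat.card G = n)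
    (hco : Nat.Coprime n m) (x y : G)
    (hgen : Subgroup.closure ({x, y} : Set G) = ⊤) (hord : orderOf ⁅x, y⁆ = 2) :
    Nat.card (G × Multiplicative (ZMod m)) = n * m ∧
      Subgroup.closure
          ({(x, 1), (y, Multiplicative.ofAdd 1)} : Set (G × Multiplicative (ZMod m)))
        = ⊤ ∧
      orderOf ⁅((x, 1) : G × Multiplicative (ZMod m)),
        ((y, Multiplicative.ofAdd 1) : G × Multiplicative (ZMod m))⁆ = 2 := by
  have hcard : Nat.card (Multiplicative (ZMod m)) = m :=
    (Nat.card_congr Multiplicative.toAdd).trans (Nat.card_zmod m)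
  have hordc : orderOf (Multiplicative.ofAdd (1 : ZMod m)) = m := by
    simp [orderOf_ofAdd_eq_addOrderOf]
  have hcop : (orderOf y).Coprime (orderOf (Multiplicative.ofAdd (1 : ZMod m))) := by
    rw [hordc]
    exact hco.coprime_dvd_left (hn ▸ orderOf_dvd_natCard y)
  exact ⟨by rw [Nat.card_prod, hn, hcard],
    Subgroup.closure_pair_prod_eq_top hgen (ZMod.zpowers_ofAdd_one_eq_top m) hcop,
    (orderOf_commutatorElement_mk_one x y _).trans hord⟩

/-- If a finite group `G` of order `n` is generated by `x, y` with `⁅x, y⁆` of order 2,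
and `m > 0` is coprime to `n`, then `G × C_m` (of order `n * m`) is generated by
`(x, 0)` and `(y, 1)`, and the commutator of these generators has order 2.
In particular, if `n` is tH and `gcd (n, m) = 1`, then `n * m` is tH. -/
theorem stmt_7 {G : Type*} [Group G] [Finite G] (n m : ℕ) (hn : Nat.card G = n)
    (hm : 0 < m) (hco : Nat.Coprime n m) (x y : G)
    (hgen : Subgroup.closure ({x, y} : Set G) = ⊤) (hord : orderOf ⁅x, y⁆ = 2) :
    Nat.card (G × Multiplicative (ZMod m)) = n * m ∧
      Subgroup.closure
          ({(x, 1), (y, Multiplicative.ofAdd 1)} : Set (G × Multiplicative (ZMod m)))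
        = ⊤ ∧
      orderOf ⁅((x, 1) : G × Multiplicative (ZMod m)),
        ((y, Multiplicative.ofAdd 1) : G × Multiplicative (ZMod m))⁆ = 2 :=
  stmt_7_general n m hn hco x y hgen hord
end

section
/- Let G be a finite group and U ≤ G a subgroup whose index (G:U) is coprime to |U| (a Hall subgroup). If g ∈ G with U^g ≠ U and U normalizes U^g, then the subgroup generated by U and U^g has order |U|²/|U ∩ U^g|, which is strictly larger than |U| and whose prime divisors all divide |U|; this contradicts Lagrange, so U is the unique conjugate of U fixed by U under conjugation. -/
/-!
If `U` normalizes `V = U^g`, then `UV` is a subgroup and `[UV : U] = [V : U ∩ V]` divides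
`|V| = |U|`. It also divides `[G : U]`, so coprimality forces `UV = U`; hence `V ≤ U`, and
equal orders give `V = U`.
-/

namespace Subgroup

variable {G : Type*} [Group G] {H K : Subgroup G}

theorem relIndex_sup_right_of_le_normalizer (h : H ≤ normalizer (K : Set G)) :
    K.relIndex (H ⊔ K) = K.relIndex H :=
  letI := normal_subgroupOf_of_le_normalizer h
  letI := normal_subgroupOf_sup_of_le_normalizer h
  Nat.card_congr (QuotientGroup.quotientInfEquivProdNormalizerQuotient H K h).toEquiv.symm

theorem relIndex_sup_left_of_le_normalizer [Finite H] (h : H ≤ normalizer (K : Set G)) :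
    H.relIndex (H ⊔ K) = H.relIndex K := by
  have hne : (K ⊓ H).relIndex H ≠ 0 := index_ne_zero_of_finite
  refine Nat.eq_of_mul_eq_mul_left (Nat.pos_of_ne_zero hne) ?_
  calc (K ⊓ H).relIndex H * H.relIndex (H ⊔ K)
      = (K ⊓ H).relIndex (H ⊔ K) := relIndex_mul_relIndex _ _ _ inf_le_right le_sup_left
    _ = (K ⊓ H).relIndex K * K.relIndex (H ⊔ K) :=
        (relIndex_mul_relIndex _ _ _ inf_le_left le_sup_right).symm
    _ = (K ⊓ H).relIndex H * H.relIndex K := by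
        rw [relIndex_sup_right_of_le_normalizer h, inf_relIndex_right, inf_relIndex_left,
          mul_comm]

theorem le_of_le_normalizer_of_coprime [Finite H] (hK : (Nat.card K).Coprime H.index)
    (h : H ≤ normalizer (K : Set G)) : K ≤ H := by
  have hdvd_card : H.relIndex (H ⊔ K) ∣ Nat.card K :=
    relIndex_sup_left_of_le_normalizer h ▸ relIndex_dvd_card _ _
  have hdvd_index : H.relIndex (H ⊔ K) ∣ H.index := relIndex_dvd_index_of_le le_sup_left
  have hone := Nat.eq_one_of_dvd_coprimes hK hdvd_card hdvd_index
  exact le_sup_right.trans (relIndex_eq_one.mp hone)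

end Subgroup

/-- Let `U` be a Hall subgroup of a finite group `G` (its order and index are coprime).
Then the only conjugate of `U` which is normalized by `U` is `U` itself: if `U`
normalizes the conjugate `U^g` then `U^g = U`. -/
theorem stmt_12 {G : Type*} [Group G] [Finite G] (U : Subgroup G)
    (hHall : Nat.Coprime (Nat.card U) U.index) (g : G)
    (hnorm : U ≤ Subgroup.normalizer ((U.map (MulAut.conj g).toMonoidHom : Subgroup G) : Set G)) :
    U.map (MulAut.conj g).toMonoidHom = U := by
  have hcard : Nat.card (U.map (MulAut.conj g).toMonoidHom) = Nat.card U :=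
    Subgroup.card_map_of_injective (MulAut.conj g).injective
  have hle := Subgroup.le_of_le_normalizer_of_coprime (hcard ▸ hHall) hnorm
  exact Subgroup.eq_of_le_of_card_ge hle hcard.ge
end

section
/- Let G be a finite group, π a set of primes, and U a π-Hall subgroup of G (i.e. |U| is a π-number and (G:U) is a π'-number). Then the number n of conjugates of U in G divides (G:U), and n ≡ 1 modulo the subgroup generated by π, i.e. there exist non-negative integers a_p for p ∈ π with n = 1 + Σ_{p∈π} a_p·p. -/
/-!
The conjugates of `U` form its orbit under `ConjAct G`, of size `(G : N_G(U))`, a divisor of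
`(G : U)`. Let `U` act on this orbit by conjugation. A conjugate `V` fixed by `U` is normalized
by `U`, so `(UV : V) = (U : U ∩ V)` divides both `|U|` and `(G : V) = (G : U)`, which are
coprime; hence `U ≤ V`, so `V = U`. Every other `U`-orbit has size `> 1` dividing `|U|`, so it
is a multiple of a prime of `π`.
-/

open MulAction Pointwise

theorem Nat.mem_closure_prime_dvd_of_dvd {n N : ℕ} (hnN : n ∣ N) (hn : n ≠ 1) :
    n ∈ AddSubmonoid.closure {p : ℕ | p.Prime ∧ p ∣ N} := by
  rw [← Nat.div_mul_cancel n.minFac_dvd, ← smul_eq_mul]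
  exact AddSubmonoid.nsmul_mem _ (AddSubmonoid.subset_closure
    (show n.minFac ∈ {p : ℕ | p.Prime ∧ p ∣ N} from
      ⟨Nat.minFac_prime hn, n.minFac_dvd.trans hnN⟩)) _

theorem Nat.exists_finset_sum_eq_of_mem_closure {S : Set ℕ} {n : ℕ}
    (hn : n ∈ AddSubmonoid.closure S) :
    ∃ (s : Finset ℕ) (a : ℕ → ℕ), (∀ p ∈ s, p ∈ S) ∧ n = ∑ p ∈ s, a p * p := by
  rw [← Submodule.span_nat_eq_addSubmonoidClosure, Submodule.mem_toAddSubmonoid,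
    Submodule.mem_span_set] at hn
  obtain ⟨c, hcS, rfl⟩ := hn
  exact ⟨c.support, c, fun p hp => hcS hp, rfl⟩

namespace MulAction

variable {H α : Type*} [Group H] [MulAction H α]

theorem card_orbit_dvd_card [Finite H] (a : α) : Nat.card (orbit H a) ∣ Nat.card H := by
  rw [Nat.card_coe_set_eq, ← index_stabilizer]
  exact (stabilizer H a).index_dvd_card

theorem card_orbit_eq_one_iff (ω : orbitRel.Quotient H α) :
    Nat.card ω.orbit = 1 ↔ ω.orbit.Subsingleton := by
  rw [Nat.card_eq_one_iff_unique, Set.subsingleton_coe]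
  exact and_iff_left ω.nonempty_orbit.to_subtype

theorem card_fixedPoints_eq_card_subsingleton_orbits :
    Nat.card (fixedPoints H α) =
      Nat.card {ω : orbitRel.Quotient H α // ω.orbit.Subsingleton} := by
  refine Nat.card_congr (Equiv.ofBijective
    (fun a => ⟨Quotient.mk'' a.1, subsingleton_orbit_iff_mem_fixedPoints.2 a.2⟩) ⟨?_, ?_⟩)
  · rintro ⟨a, ha⟩ ⟨b, hb⟩ hab
    exact Subtype.ext (mem_fixedPoints'.mp hb a (Quotient.exact' (congrArg Subtype.val hab)))
  · rintro ⟨ω, hω⟩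
    induction ω using Quotient.inductionOn' with
    | h a => exact ⟨⟨a, subsingleton_orbit_iff_mem_fixedPoints.1 hω⟩, rfl⟩

theorem exists_mem_closure_card_eq_card_fixedPoints_add [Finite H] [Finite α] :
    ∃ m ∈ AddSubmonoid.closure {p : ℕ | p.Prime ∧ p ∣ Nat.card H},
      Nat.card α = Nat.card (fixedPoints H α) + m := by
  classical
  have := Fintype.ofFinite α
  refine ⟨∑ ω : orbitRel.Quotient H α with ¬ω.orbit.Subsingleton, Nat.card ω.orbit,
    AddSubmonoid.sum_mem _ fun ω hω => ?_, ?_⟩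
  · have hne := mt (card_orbit_eq_one_iff ω).1 (Finset.mem_filter.1 hω).2
    rw [orbitRel.Quotient.orbit_eq_orbit_out ω Quotient.out_eq'] at hne ⊢
    exact Nat.mem_closure_prime_dvd_of_dvd (card_orbit_dvd_card _) hne
  have hfixed : ∑ ω : orbitRel.Quotient H α with ω.orbit.Subsingleton, Nat.card ω.orbit =
      Nat.card (fixedPoints H α) := by
    rw [card_fixedPoints_eq_card_subsingleton_orbits, Nat.card_eq_fintype_card,
      Fintype.card_subtype, Finset.card_eq_sum_ones]
    exact Finset.sum_congr rfl fun ω hω => (card_orbit_eq_one_iff ω).2 (Finset.mem_filter.1 hω).2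
  rw [← hfixed, Finset.sum_filter_add_sum_filter_not, Nat.card_congr (selfEquivSigmaOrbits' H α),
    Nat.card_sigma]

end MulAction

namespace Subgroup

variable {G : Type*} [Group G]

theorem relIndex_sup_of_le_normalizer {H N : Subgroup G} (hHN : H ≤ normalizer N) :
    N.relIndex (H ⊔ N) = N.relIndex H :=
  letI := normal_subgroupOf_of_le_normalizer hHN
  letI := normal_subgroupOf_sup_of_le_normalizer hHN
  Nat.card_congr (QuotientGroup.quotientInfEquivProdNormalizerQuotient H N hHN).toEquiv.symm

theorem le_of_le_normalizer_of_coprime_s13 {H K : Subgroup G} (hHK : H ≤ normalizer K)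
    (hcop : (Nat.card H).Coprime K.index) : H ≤ K := by
  rw [← relIndex_eq_one]
  refine Nat.eq_one_of_dvd_coprimes hcop (relIndex_dvd_card _ _) ?_
  rw [← relIndex_sup_of_le_normalizer hHK]
  exact relIndex_dvd_index_of_le le_sup_right

theorem index_pointwise_smul {α : Type*} [Group α] [MulDistribMulAction α G] (a : α)
    (H : Subgroup G) : (a • H).index = H.index :=
  index_map_of_bijective (MulAction.bijective a) H

theorem card_pointwise_smul {α : Type*} [Group α] [MulDistribMulAction α G] (a : α)
    (H : Subgroup G) : Nat.card (a • H : Subgroup G) = Nat.card H :=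
  (Nat.card_congr (equivSMul a H).toEquiv).symm

theorem toConjAct_smul_eq_map (g : G) (H : Subgroup G) :
    ConjAct.toConjAct g • H = H.map (MulAut.conj g).toMonoidHom :=
  rfl

theorem card_orbit_conjAct (H : Subgroup G) :
    Nat.card (orbit (ConjAct G) H) = (normalizer (H : Set G)).index := by
  rw [Nat.card_coe_set_eq, ← index_stabilizer]
  have : stabilizer (ConjAct G) H =
      (normalizer H).comap (ConjAct.ofConjAct : ConjAct G ≃* G).toMonoidHom := by
    ext g
    exact conjAct_pointwise_smul_iff (g := ConjAct.ofConjAct g)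
  rw [this, index_comap_of_surjective _ ConjAct.ofConjAct.surjective]

def conjAct (H : Subgroup G) : Subgroup (ConjAct G) :=
  H.comap (ConjAct.ofConjAct : ConjAct G ≃* G).toMonoidHom

theorem card_conjAct (H : Subgroup G) : Nat.card H.conjAct = Nat.card H :=
  Nat.card_congr (ConjAct.ofConjAct.toEquiv.subtypeEquiv fun _ => Iff.rfl)

theorem mem_fixedPoints_conjAct_iff (H V : Subgroup G) :
    V ∈ fixedPoints H.conjAct (Subgroup G) ↔ H ≤ normalizer V := by
  refine ⟨fun hV h hh => ?_, fun hHV q => ?_⟩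
  · exact conjAct_pointwise_smul_iff.1 (hV ⟨ConjAct.toConjAct h, hh⟩)
  · exact conjAct_pointwise_smul_eq_self (hHV (x := ConjAct.ofConjAct (q : ConjAct G)) q.2)

theorem eq_of_le_normalizer_pointwise_smul [Finite G] {U : Subgroup G}
    (hU : (Nat.card U).Coprime U.index) (g : ConjAct G) (hUg : U ≤ normalizer (g • U)) :
    g • U = U := by
  have hle : U ≤ g • U :=
    le_of_le_normalizer_of_coprime_s13 hUg (by rwa [index_pointwise_smul])
  exact (eq_of_le_of_card_ge hle (card_pointwise_smul g U).le).symm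

theorem fixedPoints_conjAct_orbit_eq_singleton [Finite G] {U : Subgroup G}
    (hU : (Nat.card U).Coprime U.index) :
    fixedPoints U.conjAct (orbit (ConjAct G) U) =
      {(⟨U, mem_orbit_self U⟩ : orbit (ConjAct G) U)} := by
  ext ⟨V, g, rfl⟩
  have hfix : (⟨g • U, g, rfl⟩ : orbit (ConjAct G) U) ∈ fixedPoints U.conjAct _ ↔
      g • U ∈ fixedPoints U.conjAct (Subgroup G) :=
    forall_congr' fun _ => Subtype.ext_iff
  rw [hfix, mem_fixedPoints_conjAct_iff, Set.mem_singleton_iff]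
  refine ⟨fun hUg => Subtype.ext (eq_of_le_normalizer_pointwise_smul hU g hUg), fun hgU => ?_⟩
  have hgU : g • U = U := congrArg Subtype.val hgU
  rw [hgU]
  exact le_normalizer

end Subgroup

/-- Let `G` be a finite group, `π` a set of primes and `U` a `π`-Hall subgroup of `G`
(every prime dividing `|U|` is in `π`, no prime dividing `(G : U)` is in `π`). Then the
number `n` of conjugates of `U` in `G` divides `(G : U)`, and there are non-negative
integers `a_p`, `p ∈ π`, with `n = 1 + ∑_{p ∈ π} a_p * p`. -/
theorem stmt_13 {G : Type*} [Group G] [Finite G] (π : Set ℕ) (U : Subgroup G)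
    (h1 : ∀ p : ℕ, p.Prime → p ∣ Nat.card U → p ∈ π)
    (h2 : ∀ p : ℕ, p.Prime → p ∣ U.index → p ∉ π) :
    Nat.card {H : Subgroup G | ∃ g : G, H = U.map (MulAut.conj g).toMonoidHom}
        ∣ U.index ∧
      ∃ (s : Finset ℕ) (a : ℕ → ℕ), (∀ p ∈ s, p.Prime ∧ p ∈ π) ∧
        Nat.card {H : Subgroup G | ∃ g : G, H = U.map (MulAut.conj g).toMonoidHom}
          = 1 + ∑ p ∈ s, a p * p := by
  have hcop : (Nat.card U).Coprime U.index :=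
    Nat.coprime_of_dvd fun p hp hpU hpi => h2 p hp hpi (h1 p hp hpU)
  have hconj : {H : Subgroup G | ∃ g : G, H = U.map (MulAut.conj g).toMonoidHom} =
      orbit (ConjAct G) U := by
    ext H
    exact ⟨fun ⟨g, hg⟩ => ⟨ConjAct.toConjAct g, (U.toConjAct_smul_eq_map g).trans hg.symm⟩,
      fun ⟨g, hg⟩ => ⟨ConjAct.ofConjAct g, ((U.toConjAct_smul_eq_map _).symm.trans hg).symm⟩⟩
  have : Finite (ConjAct G) := Finite.of_equiv G ConjAct.toConjAct.toEquiv
  rw [hconj, Subgroup.card_orbit_conjAct]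
  refine ⟨Subgroup.index_dvd_of_le Subgroup.le_normalizer, ?_⟩
  obtain ⟨m, hm, hcard⟩ :=
    exists_mem_closure_card_eq_card_fixedPoints_add (H := U.conjAct) (α := orbit (ConjAct G) U)
  rw [Subgroup.fixedPoints_conjAct_orbit_eq_singleton hcop,
    Nat.card_unique (α := ({_} : Set (orbit (ConjAct G) U))), Subgroup.card_orbit_conjAct] at hcard
  obtain ⟨s, a, hs, rfl⟩ := Nat.exists_finset_sum_eq_of_mem_closure
    (AddSubmonoid.closure_mono (t := {p : ℕ | p.Prime ∧ p ∈ π})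
      (fun p (hp : p.Prime ∧ _) => ⟨hp.1, h1 p hp.1 (U.card_conjAct ▸ hp.2)⟩) hm)
  exact ⟨s, a, hs, hcard⟩
end

section
/- Let G be a finite solvable group whose order is divisible by 4 but not by 8 and not by 12. Then G has a normal subgroup of index 4. -/
/-!
The Sylow 2-subgroup `P` has order 4, so it is abelian and `|Aut P|` divides `4! = 24`.
Its index `|G| / 4` is odd, and not divisible by 3 since `12 ∤ |G|`, so it is coprime to
`|Aut P|`. As `N(P)/C(P)` embeds in `Aut P` and its order divides `[G : P]`, we get
`N(P) = C(P)`, and Burnside's transfer theorem gives a normal 2-complement, of index `|P| = 4`.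
-/

open Subgroup

theorem Nat.card_mulAut_dvd_factorial (M : Type*) [Mul M] [Finite M] :
    Nat.card (MulAut M) ∣ (Nat.card M).factorial := by
  rw [← Nat.card_perm]
  exact card_dvd_of_injective (MulAut.toPerm M) fun _ _ h ↦
    MulEquiv.toEquiv_injective h

theorem Sylow.card_eq_pow_of_dvd_of_not_dvd {G : Type*} [Group G] [Finite G] {p n : ℕ}
    [Fact p.Prime] (P : Sylow p G) (hdvd : p ^ n ∣ Nat.card G)
    (hndvd : ¬p ^ (n + 1) ∣ Nat.card G) : Nat.card P = p ^ n := by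
  have hp : p.Prime := Fact.out
  rw [P.card_eq_multiplicity]
  rw [hp.pow_dvd_iff_le_factorization Nat.card_pos.ne'] at hdvd hndvd
  congr 1
  omega

theorem Subgroup.normalizer_le_centralizer_of_coprime {G : Type*} [Group G] {H : Subgroup G}
    [IsMulCommutative H] (hcop : H.index.Coprime (Nat.card (MulAut H))) :
    normalizer (H : Set G) ≤ centralizer (H : Set G) := by
  have hAut := card_dvd_of_injective _ (QuotientGroup.kerLift_injective H.normalizerMonoidHom)
  rw [normalizerMonoidHom_ker, ← index, ← relIndex] at hAut
  have hindex : (centralizer (H : Set G)).relIndex (normalizer (H : Set G)) ∣ H.index :=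
    (relIndex_dvd_of_le_left _ H.le_centralizer).trans (relIndex_dvd_index_of_le H.le_normalizer)
  exact relIndex_eq_one.mp (Nat.eq_one_of_dvd_coprimes hcop hindex hAut)

theorem stmt_14_general {G : Type*} [Group G] [Finite G]
    (h4 : 4 ∣ Nat.card G) (h8 : ¬ 8 ∣ Nat.card G) (h12 : ¬ 12 ∣ Nat.card G) :
    ∃ U : Subgroup G, U.Normal ∧ U.index = 4 := by
  have : Fact (Nat.Prime 2) := ⟨Nat.prime_two⟩
  obtain ⟨P⟩ : Nonempty (Sylow 2 G) := inferInstance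
  have hcard : Nat.card P = 2 ^ 2 := P.card_eq_pow_of_dvd_of_not_dvd h4 h8
  have : IsMulCommutative P := IsPGroup.isMulCommutative_of_card_eq_prime_sq hcard
  have hmul : 4 * P.index = Nat.card G := by rw [← (P : Subgroup G).card_mul_index, hcard]; rfl
  have hodd : ¬2 ∣ P.index := P.not_dvd_index
  have hthree : ¬3 ∣ P.index := fun h ↦ h12 (hmul ▸ Nat.mul_dvd_mul_left 4 h)
  have hcop : P.index.Coprime (Nat.card (MulAut P)) := by
    refine Nat.Coprime.coprime_dvd_right (Nat.card_mulAut_dvd_factorial P) ?_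
    rw [hcard, show Nat.factorial (2 ^ 2) = 2 ^ 3 * 3 from rfl]
    exact (Nat.Coprime.pow_right 3 ((Nat.prime_two.coprime_iff_not_dvd).mpr hodd).symm).mul_right
      ((Nat.prime_three.coprime_iff_not_dvd).mpr hthree).symm
  have hP := normalizer_le_centralizer_of_coprime hcop
  exact ⟨(MonoidHom.transferSylow P hP).ker, MonoidHom.normal_ker _,
    by rw [(MonoidHom.ker_transferSylow_isComplement' P hP).symm.index_eq_card, hcard]; rfl⟩

/-- A finite solvable group whose order is divisible by 4 but neither by 8 nor by 12
has a normal subgroup of index 4. -/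
theorem stmt_14 {G : Type*} [Group G] [Finite G] [Group.IsSolvable G]
    (h4 : 4 ∣ Nat.card G) (h8 : ¬ 8 ∣ Nat.card G) (h12 : ¬ 12 ∣ Nat.card G) :
    ∃ U : Subgroup G, U.Normal ∧ U.index = 4 :=
  stmt_14_general h4 h8 h12
end

section
/- Let g ≥ 2, let G be a group acting on data as follows: d a positive integer, g_Q ≥ 1 an integer, k ≥ 0 an integer, and positive integers s_1, …, s_k, e_1, …, e_k with s_i·e_i = d and e_i ≥ 2, satisfying the Riemann–Hurwitz relation 2g − 2 = d(2g_Q − 2) + Σ_{i=1}^{k} s_i(e_i − 1). Then d ≤ 4g − 4, with equality if and only if g_Q = 1, k = 1, and e_1 = 2. -/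
/-!
Since `e i ≥ 2`, each ramification term `s i * (e i - 1) = d - s i` is at least `d / 2`, so
Riemann–Hurwitz gives `(4 gQ - 4 + k) * d ≤ 4 g - 4`. The coefficient is a positive integer:
for `gQ = 1` the cover must branch since `g ≥ 2`. Hence `d ≤ 4 g - 4`, and equality forces the
coefficient to be `1`, i.e. `gQ = 1` and `k = 1`, and the single term to equal `d / 2`, i.e. `e 0 = 2`.
-/

open Finset

theorem le_two_mul_ramification {s e d : ℕ} (hse : s * e = d) (he : 2 ≤ e) :
    (d : ℤ) ≤ 2 * (s * ((e : ℤ) - 1)) := by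
  have he' : (2 : ℤ) ≤ e := by exact_mod_cast he
  rw [← hse]
  push_cast
  nlinarith [mul_nonneg (Int.natCast_nonneg s) (sub_nonneg.2 he')]

theorem two_mul_ramification_eq_iff {s e : ℕ} (hs : s ≠ 0) :
    2 * ((s : ℤ) * ((e : ℤ) - 1)) = s * e ↔ e = 2 := by
  have hdiff : 2 * ((s : ℤ) * ((e : ℤ) - 1)) - s * e = s * ((e : ℤ) - 2) := by ring
  constructor
  · intro h
    rcases mul_eq_zero.1 (hdiff ▸ sub_eq_zero.2 h) with h | h
    · exact absurd (by exact_mod_cast h) hs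
    · omega
  · rintro rfl
    ring

theorem card_mul_le_two_mul_sum_ramification {k d : ℕ} (s e : Fin k → ℕ)
    (hse : ∀ i, s i * e i = d) (he : ∀ i, 2 ≤ e i) :
    (k : ℤ) * d ≤ 2 * ∑ i, (s i : ℤ) * ((e i : ℤ) - 1) := by
  rw [mul_sum]
  simpa using card_nsmul_le_sum univ _ (d : ℤ) fun i _ => le_two_mul_ramification (hse i) (he i)

section RiemannHurwitz

variable {g d gQ k : ℕ} {s e : Fin k → ℕ}

theorem mul_le_of_riemannHurwitz (hse : ∀ i, s i * e i = d) (he : ∀ i, 2 ≤ e i)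
    (hRH : (2 * g : ℤ) - 2 = (d : ℤ) * (2 * gQ - 2) + ∑ i, (s i : ℤ) * ((e i : ℤ) - 1)) :
    (4 * (gQ : ℤ) - 4 + k) * d ≤ 4 * g - 4 := by
  have := card_mul_le_two_mul_sum_ramification s e hse he
  linarith

theorem riemannHurwitz_coeff_pos (hg : 2 ≤ g) (hgQ : 1 ≤ gQ)
    (hRH : (2 * g : ℤ) - 2 = (d : ℤ) * (2 * gQ - 2) + ∑ i, (s i : ℤ) * ((e i : ℤ) - 1)) :
    0 < 4 * (gQ : ℤ) - 4 + k := by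
  rcases Nat.eq_zero_or_pos k with rfl | hk
  · simp only [univ_eq_empty, sum_empty, add_zero] at hRH
    nlinarith
  · omega

theorem eq_four_mul_sub_four_iff_of_single_branch_point {s e : ℕ} (hg : 2 ≤ g) (hse : s * e = d)
    (hRH : (2 * g : ℤ) - 2 = s * ((e : ℤ) - 1)) :
    (d : ℤ) = 4 * g - 4 ↔ e = 2 := by
  have hs : s ≠ 0 := by
    rintro rfl
    simp only [Nat.cast_zero, zero_mul] at hRH
    omega
  rw [← two_mul_ramification_eq_iff hs, ← hse]
  push_cast
  constructor <;> intro h <;> linarith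

end RiemannHurwitz

theorem stmt_19_general (g d gQ k : ℕ) (hg : 2 ≤ g) (hgQ : 1 ≤ gQ)
    (s e : Fin k → ℕ) (hse : ∀ i, s i * e i = d)
    (he : ∀ i, 2 ≤ e i)
    (hRH : (2 * g : ℤ) - 2
      = (d : ℤ) * (2 * gQ - 2) + ∑ i, (s i : ℤ) * ((e i : ℤ) - 1)) :
    d ≤ 4 * g - 4 ∧ (d = 4 * g - 4 ↔ gQ = 1 ∧ k = 1 ∧ ∀ i, e i = 2) := by
  have hmul := mul_le_of_riemannHurwitz hse he hRH
  have hcoeff := riemannHurwitz_coeff_pos hg hgQ hRH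
  have hle : (d : ℤ) ≤ 4 * g - 4 := by nlinarith
  have hsingle (hQ : gQ = 1) (hk : k = 1) : (d : ℤ) = 4 * g - 4 ↔ ∀ i, e i = 2 := by
    subst hQ hk
    simp only [Fin.sum_univ_one, Nat.cast_one, mul_one, sub_self, mul_zero, zero_add] at hRH
    rw [Fin.forall_fin_one]
    exact eq_four_mul_sub_four_iff_of_single_branch_point hg (hse 0) hRH
  refine ⟨by omega, fun hdeq => ?_, fun ⟨hQ, hk, he2⟩ => ?_⟩
  · have hdeq' : (d : ℤ) = 4 * g - 4 := by omega
    have hc : 4 * (gQ : ℤ) - 4 + k = 1 := by nlinarith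
    obtain ⟨hQ, hk⟩ : gQ = 1 ∧ k = 1 := by omega
    exact ⟨hQ, hk, (hsingle hQ hk).1 hdeq'⟩
  · have := (hsingle hQ hk).2 he2
    omega

/-- Numerical form of the bound on the translation group: let `g ≥ 2`, `d ≥ 1`,
`gQ ≥ 1`, `k ≥ 0`, and positive integers `s i`, `e i` with `s i * e i = d` and
`e i ≥ 2`, satisfying the Riemann–Hurwitz relation
`2g - 2 = d(2 gQ - 2) + ∑ i, s i (e i - 1)`.  Then `d ≤ 4g - 4`, with equality if and
only if `gQ = 1`, `k = 1` and all `e i = 2`. -/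
theorem stmt_19 (g d gQ k : ℕ) (hg : 2 ≤ g) (hd : 1 ≤ d) (hgQ : 1 ≤ gQ)
    (s e : Fin k → ℕ) (hse : ∀ i, s i * e i = d) (hs : ∀ i, 1 ≤ s i)
    (he : ∀ i, 2 ≤ e i)
    (hRH : (2 * g : ℤ) - 2
      = (d : ℤ) * (2 * gQ - 2) + ∑ i, (s i : ℤ) * ((e i : ℤ) - 1)) :
    d ≤ 4 * g - 4 ∧ (d = 4 * g - 4 ↔ gQ = 1 ∧ k = 1 ∧ ∀ i, e i = 2) :=
  stmt_19_general g d gQ k hg hgQ s e hse he hRH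
end
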